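/- Necessity of support inclusion: If a bivariate sequence β of degree 2k has a representing measure μ on ℝ² and p ∈ ℝ[x,y] with deg p ≤ k satisfies p(X) = 0 as a column relation of the moment matrix M_k(β) (i.e., M_k(β) applied to the coefficient vector of p is zero), then the support of μ is contained in the zero set Z(p) = {(x,y) ∈ ℝ² : p(x,y) = 0}. -/
import Mathlib


open Matrix MeasureTheory

/-- Index set of bivariate monomials x^i y^j of total degree ≤ k. -/
def momIdx (k : ℕ) : Finset (ℕ × ℕ) :=
  (Finset.range (k+1) ×ˢ Finset.range (k+1)).filter (fun p => p.1 + p.2 ≤ k)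

/-- The bivariate moment matrix M_k(β), indexed by monomials of total degree ≤ k. -/
def momMat (k : ℕ) (β : ℕ → ℕ → ℝ) : Matrix (momIdx k) (momIdx k) ℝ :=
  fun p q => β (p.1.1 + q.1.1) (p.1.2 + q.1.2)

/-- The coefficient vector of a bivariate polynomial p, indexed by monomials of degree ≤ k. -/
noncomputable def coeffVec (k : ℕ) (p : MvPolynomial (Fin 2) ℝ) : momIdx k → ℝ :=
  fun q => MvPolynomial.coeff (Finsupp.single (0 : Fin 2) q.1.1 + Finsupp.single 1 q.1.2) p

noncomputable def φmon : ℕ × ℕ → (Fin 2 →₀ ℕ) := fun q => Finsupp.single 0 q.1 + Finsupp.single 1 q.2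

lemma φmon_apply0 (q : ℕ × ℕ) : φmon q 0 = q.1 := by simp [φmon]
lemma φmon_apply1 (q : ℕ × ℕ) : φmon q 1 = q.2 := by simp [φmon]

lemma φmon_inj : Function.Injective φmon := by
  intro a b h
  have h0 := congrArg (fun f => f 0) h
  have h1 := congrArg (fun f => f 1) h
  simp [φmon, Finsupp.single_apply] at h0 h1
  exact Prod.ext h0 h1

lemma fin2_eq (d : Fin 2 →₀ ℕ) : d = φmon (d 0, d 1) := by
  ext i
  fin_cases i <;> simp [φmon, Finsupp.single_apply]

lemma eval_expand (k : ℕ) (p : MvPolynomial (Fin 2) ℝ) (hdeg : p.totalDegree ≤ k) (z : ℝ × ℝ) :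
    MvPolynomial.eval ![z.1, z.2] p
      = ∑ q ∈ momIdx k, MvPolynomial.coeff (φmon q) p * (z.1 ^ q.1 * z.2 ^ q.2) := by
  have hsub : p.support ⊆ (momIdx k).image φmon := by
    intro d hd
    have hdeg' : d 0 + d 1 ≤ k := by
      refine le_trans ?_ (le_trans (MvPolynomial.le_totalDegree hd) hdeg)
      rw [Finsupp.sum_fintype _ _ (fun _ => rfl), Fin.sum_univ_two]
    refine Finset.mem_image.2 ⟨(d 0, d 1), ?_, (fin2_eq d).symm⟩
    simp [momIdx, Finset.mem_filter, Nat.lt_succ_iff]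
    exact ⟨⟨le_trans (Nat.le_add_right _ _) hdeg', le_trans (Nat.le_add_left _ _) hdeg'⟩, hdeg'⟩
  rw [MvPolynomial.eval_eq']
  simp only [Fin.prod_univ_two, Matrix.cons_val_zero, Matrix.cons_val_one, Matrix.head_cons]
  rw [Finset.sum_subset hsub (fun d _ hd => by
    simp [MvPolynomial.notMem_support_iff.1 hd])]
  rw [Finset.sum_image (fun a _ b _ h => φmon_inj h)]
  simp only [φmon_apply0, φmon_apply1]

/-- Necessity of support inclusion: a column relation p(X) = 0 of the moment matrix forces
any representing measure to be supported in the zero set of p. -/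
theorem stmt15 (k : ℕ) (β : ℕ → ℕ → ℝ) (μ : Measure (ℝ × ℝ))
    (hint : ∀ i j : ℕ, i + j ≤ 2*k →
      Integrable (fun z : ℝ × ℝ => z.1 ^ i * z.2 ^ j) μ)
    (hmom : ∀ i j : ℕ, i + j ≤ 2*k → β i j = ∫ z, z.1 ^ i * z.2 ^ j ∂μ)
    (p : MvPolynomial (Fin 2) ℝ) (hdeg : p.totalDegree ≤ k)
    (hrel : (momMat k β) *ᵥ (coeffVec k p) = 0) :
    μ {z : ℝ × ℝ | MvPolynomial.eval ![z.1, z.2] p ≠ 0} = 0 := by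
  set C : ℕ × ℕ → ℝ := fun q => MvPolynomial.coeff (φmon q) p with hC
  set f : ℝ × ℝ → ℝ := fun z => (MvPolynomial.eval ![z.1, z.2] p) ^ 2 with hf
  have hmem : ∀ q ∈ momIdx k, q.1 + q.2 ≤ k := by
    intro q hq
    simp [momIdx, Finset.mem_filter] at hq
    exact hq.2
  set F : ℕ × ℕ → ℕ × ℕ → ℝ × ℝ → ℝ :=
    fun q r z => (C q * C r) * (z.1 ^ (q.1 + r.1) * z.2 ^ (q.2 + r.2)) with hF
  have hf_eq : ∀ z, f z = ∑ q ∈ momIdx k, ∑ r ∈ momIdx k, F q r z := by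
    intro z
    rw [hf]
    simp only [eval_expand k p hdeg z, sq, Finset.sum_mul_sum, hF]
    refine Finset.sum_congr rfl fun q _ => Finset.sum_congr rfl fun r _ => ?_
    rw [pow_add, pow_add, hC]
    ring
  have hFint : ∀ q ∈ momIdx k, ∀ r ∈ momIdx k, Integrable (F q r) μ := by
    intro q hq r hr
    exact ((hint (q.1 + r.1) (q.2 + r.2) (by have := hmem q hq; have := hmem r hr; omega)).const_mul _)
  have hfint : Integrable f μ := by
    rw [show f = fun z => ∑ q ∈ momIdx k, ∑ r ∈ momIdx k, F q r z from funext hf_eq]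
    exact integrable_finset_sum _ fun q hq => integrable_finset_sum _ fun r hr => hFint q hq r hr
  have hintegral : ∫ z, f z ∂μ = 0 := by
    rw [show (fun z => f z) = fun z => ∑ q ∈ momIdx k, ∑ r ∈ momIdx k, F q r z from funext hf_eq]
    rw [integral_finset_sum _ fun q hq => integrable_finset_sum _ fun r hr => hFint q hq r hr]
    have h1 : ∀ q ∈ momIdx k, ∫ z, ∑ r ∈ momIdx k, F q r z ∂μ
        = C q * ∑ r ∈ momIdx k, β (q.1 + r.1) (q.2 + r.2) * C r := by
      intro q hq
      rw [integral_finset_sum _ fun r hr => hFint q hq r hr, Finset.mul_sum]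
      refine Finset.sum_congr rfl fun r hr => ?_
      rw [hF]
      simp only []
      rw [integral_const_mul, ← hmom _ _ (by have := hmem q hq; have := hmem r hr; omega)]
      ring
    rw [Finset.sum_congr rfl h1]
    have h2 : ∀ q ∈ momIdx k, (∑ r ∈ momIdx k, β (q.1 + r.1) (q.2 + r.2) * C r) = 0 := by
      intro q hq
      have := congrFun hrel ⟨q, hq⟩
      simp only [Matrix.mulVec, dotProduct, Pi.zero_apply] at this
      rw [← this]
      exact (Finset.sum_coe_sort (momIdx k)
        (fun r => β (q.1 + r.1) (q.2 + r.2) * C r)).symm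
    rw [Finset.sum_congr rfl (fun q hq => by rw [h2 q hq, mul_zero])]
    simp
  have hae : f =ᵐ[μ] 0 :=
    (integral_eq_zero_iff_of_nonneg (fun z => sq_nonneg _) hfint).1 hintegral
  have : μ {z | f z ≠ 0} = 0 := by
    simpa [Filter.EventuallyEq, MeasureTheory.ae_iff] using hae
  convert this using 2
  ext z
  simp [hf, pow_eq_zero_iff]
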